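/- Let A be a von Neumann hyperring and S ⊆ A a multiplicative set. Then S is a von Neumann subgroup of A if and only if the Marshall quotient A/ₘS is a geometric von Neumann hyperring (i.e., A/ₘS is a von Neumann hyperring in which e + eᶜ = {1} for every idempotent e). -/

import Mathlib

universe u v

/-- A multiring: a commutative monoid with a multivalued addition. -/
class Multiring (A : Type u) extends CommMonoid A, Zero A, Neg A where
  /-- the multivalued sum: `madd b c` is the set `b + c` -/
  madd : A → A → Set A
  madd_nonempty : ∀ a b : A, (madd a b).Nonempty
  madd_rev_left : ∀ a b c : A, a ∈ madd b c → c ∈ madd (-b) a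
  madd_rev_right : ∀ a b c : A, a ∈ madd b c → b ∈ madd a (-c)
  mem_madd_zero : ∀ a b : A, a ∈ madd b 0 ↔ a = b
  madd_assoc : ∀ a b c g x : A, g ∈ madd a b → x ∈ madd g c →
    ∃ h ∈ madd b c, x ∈ madd a h
  madd_comm : ∀ a b : A, madd a b = madd b a
  mul_zero' : ∀ a : A, a * 0 = 0
  madd_mul : ∀ a b c d : A, a ∈ madd b c → a * d ∈ madd (b * d) (c * d)

namespace Multiring

variable {A : Type u} [Multiring A]

/-- the iterated multivalued sum `x₁ + ⋯ + xₙ = {x₁} + (x₂ + ⋯ + xₙ)` of a list -/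
def listSum : List A → Set A
  | [] => {(0 : A)}
  | a :: l => {x : A | ∃ y ∈ listSum l, x ∈ madd a y}

/-- an ideal of a multiring: a nonempty subset with `I + I ⊆ I` and `A·I ⊆ I` -/
def IsIdeal (I : Set A) : Prop :=
  I.Nonempty ∧ (∀ a ∈ I, ∀ b ∈ I, madd a b ⊆ I) ∧ ∀ a : A, ∀ b ∈ I, a * b ∈ I

/-- a prime ideal: a proper ideal such that `a*b ∈ p → a ∈ p ∨ b ∈ p` -/
def IsPrimeIdeal (I : Set A) : Prop :=
  IsIdeal I ∧ (1 : A) ∉ I ∧ ∀ a b : A, a * b ∈ I → a ∈ I ∨ b ∈ I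

/-- a maximal ideal: a proper ideal maximal among proper ideals -/
def IsMaximalIdeal (I : Set A) : Prop :=
  IsIdeal I ∧ (1 : A) ∉ I ∧ ∀ J : Set A, IsIdeal J → (1 : A) ∉ J → I ⊆ J → J = I

/-- a multiplicative subset -/
def IsMultiplicative (S : Set A) : Prop :=
  (1 : A) ∈ S ∧ ∀ s ∈ S, ∀ t ∈ S, s * t ∈ S

/-- a hyperring: a multiring with the strong distributivity property -/
def IsHyperring (A : Type u) [Multiring A] : Prop :=
  ∀ x b c d : A, x ∈ madd (b * d) (c * d) → ∃ a ∈ madd b c, x = a * d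

/-- a von Neumann (regular) hyperring -/
def IsVonNeumann (A : Type u) [Multiring A] : Prop :=
  IsHyperring A ∧ ∀ a : A, ∃ b : A, a = a * a * b

/-- the equivalence modulo an ideal `I`: `a ∼_I b` iff `(a + (-b)) ∩ I ≠ ∅`;
this is equality of classes in the quotient multiring `A/I`. -/
def simI (I : Set A) (a b : A) : Prop := ∃ x ∈ madd a (-b), x ∈ I

/-- membership of classes in the multivalued sum of the quotient `A/I`:
`[a] ∈ [b] + [c]` iff `a ∈ b + c + i` for some `i ∈ I`. -/
def qmemI (I : Set A) (a b c : A) : Prop := ∃ i ∈ I, ∃ w ∈ madd c i, a ∈ madd b w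

/-- representatives `x` with `[x] ∈ [c₁] + ⋯ + [cₙ]` in the quotient `A/I` -/
def qlistSumI (I : Set A) : List A → Set A
  | [] => {x : A | simI I x 0}
  | c :: l => {x : A | ∃ y ∈ qlistSumI I l, qmemI I x c y}

/-- the quotient multiring `A/I` is a multifield: `1 ≠ 0` and every nonzero
element is weak-invertible -/
def QuotIsMultifield (I : Set A) : Prop :=
  ¬ simI I 1 0 ∧
    ∀ a : A, ¬ simI I a 0 →
      ∃ l : List A, l ≠ [] ∧ (1 : A) ∈ qlistSumI I (l.map fun b => a * b)

/-- the quotient multiring `A/I` is a hyperfield: `1 ≠ 0` and every nonzero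
element is invertible -/
def QuotIsHyperfield (I : Set A) : Prop :=
  ¬ simI I 1 0 ∧ ∀ a : A, ¬ simI I a 0 → ∃ b : A, simI I (a * b) 1

/-- the Marshall equivalence associated to a multiplicative set `S`:
`a ∼_S b` iff `as = bt` for some `s,t ∈ S`; this is equality of classes in the
Marshall quotient `A/ₘS`. -/
def simM (S : Set A) (a b : A) : Prop := ∃ s ∈ S, ∃ t ∈ S, a * s = b * t

/-- `S̄ = {x : xs ∈ S for some s ∈ S}` -/
def mbar (S : Set A) : Set A := {x : A | ∃ s ∈ S, x * s ∈ S}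

/-- membership of classes in the multivalued sum of the Marshall quotient `A/ₘS`:
`[a] ∈ [b] + [c]` iff `as ∈ bt + cu` for some `s,t,u ∈ S`. -/
def qmemM (S : Set A) (a b c : A) : Prop :=
  ∃ s ∈ S, ∃ t ∈ S, ∃ u ∈ S, a * s ∈ madd (b * t) (c * u)

/-- representatives `x` with `[x] ∈ [c₁] + ⋯ + [cₙ]` in the Marshall quotient `A/ₘS` -/
def qlistSumM (S : Set A) : List A → Set A
  | [] => {x : A | simM S x 0}
  | c :: l => {x : A | ∃ y ∈ qlistSumM S l, qmemM S x c y}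

/-- the multivalued sum of the hyperfield `3 = {-1, 0, 1}` -/
def signAdd : SignType → SignType → Set SignType
  | SignType.zero, x => {x}
  | x, SignType.zero => {x}
  | SignType.pos, SignType.pos => {SignType.pos}
  | SignType.neg, SignType.neg => {SignType.neg}
  | _, _ => Set.univ

/-- a multiring morphism `A → 3`, i.e. an order of `A` -/
def IsSignMorphism (σ : A → SignType) : Prop :=
  (∀ a b c : A, a ∈ madd b c → σ a ∈ signAdd (σ b) (σ c)) ∧
  (∀ a b : A, σ (a * b) = σ a * σ b) ∧
  (∀ a : A, σ (-a) = -(σ a)) ∧ σ 0 = 0 ∧ σ 1 = 1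

/-- a prime cone of a multiring -/
def IsPrimeCone (P : Set A) : Prop :=
  (∀ a : A, a * a ∈ P) ∧ (∀ a ∈ P, ∀ b ∈ P, madd a b ⊆ P) ∧
  (∀ a ∈ P, ∀ b ∈ P, a * b ∈ P) ∧ (∀ a : A, a ∈ P ∨ -a ∈ P) ∧
  IsPrimeIdeal {x : A | x ∈ P ∧ -x ∈ P}

open Classical in
/-- the map `σ_P : A → 3` associated to a prime cone `P` -/
noncomputable def sigmaOf (P : Set A) (a : A) : SignType :=
  if a ∈ P ∧ -a ∈ P then 0 else if a ∈ P then 1 else -1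

/-- `ΣA²`: the set of elements lying in some finite sum of squares -/
def SumsOfSquares (A : Type u) [Multiring A] : Set A :=
  {x : A | ∃ l : List A, l ≠ [] ∧ x ∈ listSum (l.map fun a => a * a)}

/-- a multiring is semi-real when `-1 ∉ ΣA²` -/
def IsSemiReal (A : Type u) [Multiring A] : Prop := (-(1 : A)) ∉ SumsOfSquares A

/-- a real reduced multiring -/
def IsRealReduced (A : Type u) [Multiring A] : Prop :=
  IsSemiReal A ∧ (∀ a : A, a * a * a = a) ∧
  (∀ a b : A, madd a (a * b * b) = {a}) ∧
  (∀ a b : A, ∃ c : A, madd (a * a) (b * b) = {c})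

/-- a hyperfield: a hyperring with `1 ≠ 0` and all nonzero elements invertible -/
def IsHyperfield (A : Type u) [Multiring A] : Prop :=
  IsHyperring A ∧ (1 : A) ≠ 0 ∧ ∀ a : A, a ≠ 0 → ∃ b : A, a * b = 1

/-- a morphism of multirings -/
def IsMorphism {B : Type v} [Multiring B] (f : A → B) : Prop :=
  (∀ a b c : A, a ∈ madd b c → f a ∈ madd (f b) (f c)) ∧
  (∀ a b : A, f (a * b) = f a * f b) ∧
  (∀ a : A, f (-a) = -(f a)) ∧ f 0 = 0 ∧ f 1 = 1

/-- the radical `√α = {x : xⁿ ∈ α for some n ≥ 1}` of an ideal -/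
def radical (α : Set A) : Set A := {x : A | ∃ n : ℕ, 1 ≤ n ∧ x ^ n ∈ α}

/-- the ideal `(x) = ∪ {t₁x + ⋯ + tₙx}` generated by `x` -/
def genIdeal (x : A) : Set A :=
  {y : A | ∃ l : List A, l ≠ [] ∧ y ∈ listSum (l.map fun t => t * x)}

/-- `S_a = {x : aⁿ ∈ (x) for some n ≥ 0}` -/
def Sgen (a : A) : Set A := {x : A | ∃ n : ℕ, a ^ n ∈ genIdeal x}

/-- `a` is weak-invertible when `1 ∈ ab₁ + ⋯ + abₙ` for some `b₁,…,bₙ` -/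
def WeakInvertible (a : A) : Prop :=
  ∃ l : List A, l ≠ [] ∧ (1 : A) ∈ listSum (l.map fun b => a * b)

/-- the prime spectrum of a multiring -/
abbrev Spec (A : Type u) [Multiring A] : Type u := {p : Set A // IsPrimeIdeal p}

/-- the spectral topology on `spec A`, generated by the sets `D(a) = {p : a ∉ p}` -/
instance : TopologicalSpace (Spec A) :=
  TopologicalSpace.generateFrom {U : Set (Spec A) | ∃ a : A, U = {p : Spec A | a ∉ p.1}}

/-- the Marshall quotient `A/ₘS` is a real reduced multiring (expressed on
representatives) -/
def QuotIsRealReduced (S : Set A) : Prop :=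
  (∀ l : List A, l ≠ [] → (-(1 : A)) ∉ qlistSumM S (l.map fun a => a * a)) ∧
  (∀ a : A, simM S (a * a * a) a) ∧
  (∀ a b x : A, qmemM S x a (a * b * b) ↔ simM S x a) ∧
  (∀ a b : A, ∃ c : A, ∀ x : A, qmemM S x (a * a) (b * b) ↔ simM S x c)

/-- the Marshall quotient `A/ₘS` is a geometric von Neumann hyperring
(expressed on representatives): it is a hyperring, von Neumann regular, and
`e + eᶜ = {1}` for every idempotent `e` -/
def QuotGeometricVN (S : Set A) : Prop :=
  (∀ x b c d : A, qmemM S x (b * d) (c * d) → ∃ a : A, qmemM S a b c ∧ simM S x (a * d)) ∧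
  (∀ a : A, ∃ b : A, simM S a (a * a * b)) ∧
  (∀ e x : A, simM S (e * e) e → qmemM S x 1 (-e) → simM S (e * x) 0 →
    ∀ y : A, qmemM S y e x ↔ simM S y 1)

/-- a von Neumann subgroup: a multiplicative set such that for every idempotent
`a` (with complement `aᶜ`) and every `x ∈ D_S(a, aᶜ)` there is `s ∈ S` with `xs ∈ S` -/
def IsVNSubgroup (S : Set A) : Prop :=
  IsMultiplicative S ∧
    ∀ a x ac : A, a * a = a → ac ∈ madd 1 (-a) → a * ac = 0 →
      (∃ u ∈ S, ∃ v ∈ S, ∃ w ∈ S, x * u ∈ madd (a * v) (ac * w)) →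
      ∃ s ∈ S, x * s ∈ S

/-- a preorder of a multiring -/
def IsPreorderSet (T : Set A) : Prop :=
  (∀ a : A, a * a ∈ T) ∧ (∀ a ∈ T, ∀ b ∈ T, a * b ∈ T) ∧ (∀ a ∈ T, ∀ b ∈ T, madd a b ⊆ T)

/-- `1 + T = ∪ {1 + t : t ∈ T}` -/
def oneAdd (T : Set A) : Set A := {x : A | ∃ t ∈ T, x ∈ madd 1 t}

/-- `ΣḞ²`: elements lying in some finite sum of squares of nonzero elements -/
def sumSqNonzero (A : Type u) [Multiring A] : Set A :=
  {x : A | ∃ l : List A, l ≠ [] ∧ (∀ a ∈ l, a ≠ 0) ∧ x ∈ listSum (l.map fun a => a * a)}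

end Multiring

/-! Over a von Neumann hyperring, an idempotent class `[e]` of `A/ₘS` lifts to the idempotent
`ε = e * b` of `A` (where `e = e * e * b`), and the complement of `[e]` is the class of `εᶜ`. So
`[e] + [e]ᶜ` is the set of classes of `D_S(ε, εᶜ)`, and it is `{[1]}` exactly when every element
of `D_S(ε, εᶜ)` has a multiple by `S` lying in `S`. The hyperring and regularity axioms pass to
the quotient directly. -/

namespace Multiring

variable {A : Type u} [Multiring A]

lemma mem_madd_of_eq {a b c a' b' c' : A} (h : a ∈ madd b c)
    (ha : a = a') (hb : b = b') (hc : c = c') : a' ∈ madd b' c' := by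
  subst ha hb hc; exact h

lemma zero_mem_madd_neg_self (a : A) : (0 : A) ∈ madd (-a) a :=
  madd_rev_left a a 0 ((mem_madd_zero a a).2 rfl)

lemma neg_neg' (a : A) : -(-a) = a :=
  ((mem_madd_zero a (-(-a))).1 (madd_rev_left 0 (-a) a (zero_mem_madd_neg_self a))).symm

lemma zero_mul' (a : A) : (0 : A) * a = 0 := by
  rw [mul_comm]; exact mul_zero' a

lemma neg_mul' (a b : A) : (-a) * b = -(a * b) := by
  have h : (0 : A) ∈ madd ((-a) * b) (a * b) := by
    simpa only [zero_mul'] using madd_mul 0 (-a) a b (zero_mem_madd_neg_self a)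
  have h' := madd_rev_right 0 ((-a) * b) (a * b) h
  rw [madd_comm] at h'
  exact (mem_madd_zero _ _).1 h'

lemma neg_zero' : -(0 : A) = 0 := by
  simpa only [mul_zero'] using (neg_mul' (0 : A) 0).symm

lemma one_mem_madd_of_mem_madd_one_neg {c e : A} (hc : c ∈ madd 1 (-e)) :
    (1 : A) ∈ madd e c := by
  have h := madd_rev_right c 1 (-e) hc
  rwa [neg_neg', madd_comm] at h

/-- In a hyperring, `eᶜ` arises from `0 ∈ (-1)e + ee` by strong distributivity. -/
lemma IsHyperring.exists_compl (hH : IsHyperring A) {e : A} (he : e * e = e) :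
    ∃ c ∈ madd 1 (-e), e * c = 0 := by
  have h0 : (0 : A) ∈ madd ((-1) * e) (e * e) := by
    rw [he, neg_mul', one_mul]; exact zero_mem_madd_neg_self e
  obtain ⟨a, ha, h0a⟩ := hH 0 (-1) e e h0
  refine ⟨-a, ?_, ?_⟩
  · have h := madd_rev_right (-e) (-a) (-1)
      (madd_rev_left (-1) a (-e) (madd_rev_right a (-1) e ha))
    rwa [neg_neg', madd_comm] at h
  · rw [mul_comm, neg_mul', ← h0a, neg_zero']

section MarshallQuotient

variable {S : Set A}

lemma simM_refl (hS : IsMultiplicative S) (a : A) : simM S a a :=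
  ⟨1, hS.1, 1, hS.1, rfl⟩

lemma simM_symm {a b : A} : simM S a b → simM S b a
  | ⟨s, hs, t, ht, h⟩ => ⟨t, ht, s, hs, h.symm⟩

lemma simM_trans (hS : IsMultiplicative S) {a b c : A} :
    simM S a b → simM S b c → simM S a c
  | ⟨s, hs, t, ht, hab⟩, ⟨s', hs', t', ht', hbc⟩ =>
    ⟨s * s', hS.2 s hs s' hs', t' * t, hS.2 t' ht' t ht, by
      rw [← mul_assoc, hab, mul_right_comm, hbc, mul_assoc]⟩

lemma simM_mul_right {a b : A} (d : A) : simM S a b → simM S (a * d) (b * d)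
  | ⟨s, hs, t, ht, h⟩ => ⟨s, hs, t, ht, by rw [mul_right_comm, h, mul_right_comm]⟩

lemma simM_neg {a b : A} : simM S a b → simM S (-a) (-b)
  | ⟨s, hs, t, ht, h⟩ => ⟨s, hs, t, ht, by rw [neg_mul', neg_mul', h]⟩

lemma qmemM_of_mem (hS : IsMultiplicative S) {a b c : A} (h : a ∈ madd b c) :
    qmemM S a b c :=
  ⟨1, hS.1, 1, hS.1, 1, hS.1, by simpa only [mul_one] using h⟩

lemma qmemM_comm {a b c : A} : qmemM S a b c → qmemM S a c b
  | ⟨s, hs, t, ht, u, hu, h⟩ => ⟨s, hs, u, hu, t, ht, by rwa [madd_comm]⟩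

lemma qmemM_mul_right {a b c : A} (d : A) : qmemM S a b c → qmemM S (a * d) (b * d) (c * d)
  | ⟨s, hs, t, ht, u, hu, h⟩ => ⟨s, hs, t, ht, u, hu,
    mem_madd_of_eq (madd_mul _ _ _ d h) (mul_right_comm _ _ _) (mul_right_comm _ _ _)
      (mul_right_comm _ _ _)⟩

lemma qmemM_congr (hS : IsMultiplicative S) {a b c a' b' c' : A} :
    qmemM S a b c → simM S a a' → simM S b b' → simM S c c' → qmemM S a' b' c'
  | ⟨s, hs, t, ht, u, hu, h⟩, ⟨p, hp, p', hp', ha⟩, ⟨q, hq, q', hq', hb⟩,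
      ⟨r, hr, r', hr', hc⟩ => by
    have mem := hS.2
    refine ⟨p' * (s * q * r), mem _ hp' _ (mem _ (mem _ hs _ hq) _ hr),
      q' * (t * p * r), mem _ hq' _ (mem _ (mem _ ht _ hp) _ hr),
      r' * (u * p * q), mem _ hr' _ (mem _ (mem _ hu _ hp) _ hq),
      mem_madd_of_eq (madd_mul _ _ _ (p * q * r) h) ?_ ?_ ?_⟩
    · rw [show a * s * (p * q * r) = a * p * (s * q * r) by ac_rfl, ha, mul_assoc]
    · rw [show b * t * (p * q * r) = b * q * (t * p * r) by ac_rfl, hb, mul_assoc]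
    · rw [show c * u * (p * q * r) = c * r * (u * p * q) by ac_rfl, hc, mul_assoc]

lemma simM_of_qmemM_of_simM_zero (hS : IsMultiplicative S) {a b c : A}
    (h : qmemM S a b c) (hc : simM S c 0) : simM S a b := by
  obtain ⟨s, hs, t, ht, u, hu, h⟩ := qmemM_congr hS h (simM_refl hS a) (simM_refl hS b) hc
  rw [zero_mul', mem_madd_zero] at h
  exact ⟨s, hs, t, ht, h⟩

/-- The lift is `e * b`. -/
lemma exists_idempotent_simM {e b : A} (hb : e = e * e * b) (he : simM S (e * e) e) :
    ∃ ε : A, ε * ε = ε ∧ simM S ε e := by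
  obtain ⟨s, hs, t, ht, h⟩ := he
  refine ⟨e * b, ?_, t, ht, s, hs, ?_⟩
  · calc e * b * (e * b) = e * e * b * b := by ac_rfl
      _ = e * b := by rw [← hb]
  · calc e * b * t = e * e * s * b := by rw [h]; ac_rfl
      _ = e * s := by rw [mul_right_comm, ← hb]

/-- Multiplying `[x] ∈ 1 - [e]` by `c` gives `[xc] = [c]`, and multiplying `1 ∈ e + c` by `x`
gives `[x] = [cx]`. -/
lemma simM_compl (hS : IsMultiplicative S) {e c x : A} (hc : c ∈ madd 1 (-e))
    (hec : e * c = 0) (hx : qmemM S x 1 (-e)) (hex : simM S (e * x) 0) : simM S x c := by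
  have hxc : simM S (x * c) c := by
    have h := qmemM_mul_right c hx
    rw [one_mul, neg_mul', hec, neg_zero'] at h
    exact simM_of_qmemM_of_simM_zero hS h (simM_refl hS 0)
  have hcx : simM S x (c * x) := by
    have h := qmemM_mul_right x (qmemM_of_mem hS (one_mem_madd_of_mem_madd_one_neg hc))
    rw [one_mul] at h
    replace h := qmemM_comm h
    exact simM_of_qmemM_of_simM_zero hS h hex
  rw [mul_comm] at hcx
  exact simM_trans hS hcx hxc

lemma IsHyperring.exists_qmemM_of_qmemM_mul (hH : IsHyperring A) (hS : IsMultiplicative S)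
    {x b c d : A} (h : qmemM S x (b * d) (c * d)) :
    ∃ a : A, qmemM S a b c ∧ simM S x (a * d) := by
  obtain ⟨s, hs, t, ht, u, hu, h⟩ := h
  obtain ⟨a, ha, hxa⟩ := hH (x * s) (b * t) (c * u) d
    (mem_madd_of_eq h rfl (mul_right_comm _ _ _) (mul_right_comm _ _ _))
  exact ⟨a, ⟨1, hS.1, t, ht, u, hu, by rwa [mul_one]⟩, s, hs, 1, hS.1, by rwa [mul_one]⟩

/-- `qmemM S y e c` says `y ∈ D_S(e, eᶜ)`. -/
lemma IsVNSubgroup.qmemM_compl_iff (hS : IsVNSubgroup S) {e c y : A} (he : e * e = e)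
    (hc : c ∈ madd 1 (-e)) (hec : e * c = 0) : qmemM S y e c ↔ simM S y 1 := by
  refine ⟨fun hy => ?_, fun hy => ?_⟩
  · obtain ⟨s, hs, hys⟩ := hS.2 e y c he hc hec hy
    exact ⟨s, hs, y * s, hys, (one_mul _).symm⟩
  · exact qmemM_congr hS.1 (qmemM_of_mem hS.1 (one_mem_madd_of_mem_madd_one_neg hc))
      (simM_symm hy) (simM_refl hS.1 e) (simM_refl hS.1 c)

/-- An idempotent `[e]` of `A/ₘS` with complement `[x]` is represented by an idempotent `ε`
of `A` with complement `c`, and then `[e] + [x] = [ε] + [c]`. -/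
lemma IsVNSubgroup.qmemM_iff_simM_one (hA : IsVonNeumann A) (hS : IsVNSubgroup S) {e x : A}
    (he : simM S (e * e) e) (hx : qmemM S x 1 (-e)) (hex : simM S (e * x) 0) (y : A) :
    qmemM S y e x ↔ simM S y 1 := by
  obtain ⟨b, hb⟩ := hA.2 e
  obtain ⟨ε, hεε, hεe⟩ := exists_idempotent_simM hb he
  obtain ⟨c, hc, hεc⟩ := hA.1.exists_compl hεε
  have hxc : simM S x c := simM_compl hS.1 hc hεc
    (qmemM_congr hS.1 hx (simM_refl hS.1 x) (simM_refl hS.1 1) (simM_neg (simM_symm hεe)))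
    (simM_trans hS.1 (simM_mul_right x hεe) hex)
  rw [← hS.qmemM_compl_iff hεε hc hεc]
  exact ⟨fun h => qmemM_congr hS.1 h (simM_refl hS.1 y) (simM_symm hεe) hxc,
    fun h => qmemM_congr hS.1 h (simM_refl hS.1 y) hεe (simM_symm hxc)⟩

lemma IsVNSubgroup.quotGeometricVN (hA : IsVonNeumann A) (hS : IsVNSubgroup S) :
    QuotGeometricVN S := by
  refine ⟨fun _ _ _ _ => hA.1.exists_qmemM_of_qmemM_mul hS.1, fun a => ?_,
    fun _ _ => hS.qmemM_iff_simM_one hA⟩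
  obtain ⟨b, hb⟩ := hA.2 a
  exact ⟨b, by rw [← hb]; exact simM_refl hS.1 a⟩

lemma QuotGeometricVN.isVNSubgroup (hS : IsMultiplicative S) (h : QuotGeometricVN S) :
    IsVNSubgroup S := by
  refine ⟨hS, fun a x ac ha hac haac hx => ?_⟩
  have ha' : simM S (a * a) a := by rw [ha]; exact simM_refl hS a
  have haac' : simM S (a * ac) 0 := by rw [haac]; exact simM_refl hS 0
  obtain ⟨s, hs, t, ht, hxs⟩ := (h.2.2 a ac ha' (qmemM_of_mem hS hac) haac' x).1 hx
  exact ⟨s, hs, by rwa [hxs, one_mul]⟩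

end MarshallQuotient

end Multiring

/-- For a von Neumann hyperring `A` and a multiplicative set `S`, `S` is a von
Neumann subgroup iff the Marshall quotient `A/ₘS` is a geometric von Neumann
hyperring. -/
theorem vnSubgroup_iff_quotient_geometric {A : Type u} [Multiring A]
    (hA : Multiring.IsVonNeumann A) (S : Set A)
    (hS : Multiring.IsMultiplicative S) :
    Multiring.IsVNSubgroup S ↔ Multiring.QuotGeometricVN S :=
  ⟨fun h => h.quotGeometricVN hA, fun h => h.isVNSubgroup hS⟩
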